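/- arXiv:1601.02208 — 2 statements merged into one kernel-verified Lean document; each statement's English description precedes it below -/
import Mathlib

section
/- For every z ∈ ℂ^n − Δ and all distinct indices i_1, i_2,...,i_{k+1} ∈ {1,...,n}, the following multiplication formula holds in A_z: f_{i_1,i_2,...,i_{k+1}}(z) · p_{i_1}(z) · w_{i_2,...,i_{k+1}} = d_{i_2,...,i_{k+1}} · ∑_{ℓ=1}^{k+1} (-1)^{ℓ+1} a_{i_ℓ} w_{i_1,...,\hat{i_ℓ},...,i_{k+1}}, where the hat denotes omission of the index i_ℓ. -/
/-!
The combination `∑ₗ (-1)^l d_{I ∖ I l} f_{I l}(t,z)` has no linear part in `t`: the coefficient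
of `t_j` is the cofactor expansion of a determinant with two equal rows. Hence it is the constant
`f_I(z)`. Multiplying by `∏ₘ p_{I m}` and cancelling `f_i ⬝ p_i = a_i` term by term gives the
formula.
-/

open MvPolynomial

noncomputable section

/-- The determinant `d_{l 1, …, l k}` of the `k × k` matrix whose `m`-th column consists of
`b (l m) 1, …, b (l m) k`. -/
def dd {n k : ℕ} (b : Fin n → Fin k → ℂ) (l : Fin k → Fin n) : ℂ :=
  Matrix.det (Matrix.of fun j m => b (l m) j)

/-- `f_i(t,z) = ∑_j b_i^j t_j + z_i` as a polynomial in `t = (t_1,…,t_k)`. -/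
def fpoly {n k : ℕ} (b : Fin n → Fin k → ℂ) (z : Fin n → ℂ) (i : Fin n) :
    MvPolynomial (Fin k) ℂ :=
  (∑ j, C (b i j) * X j) + C (z i)

/-- `f_{i_1,…,i_{k+1}}(z) = ∑_{l=1}^{k+1} (-1)^{l-1} d_{i_1,…,î_l,…,i_{k+1}} z_{i_l}`. -/
def fF {n k : ℕ} (b : Fin n → Fin k → ℂ) (z : Fin n → ℂ) (I : Fin (k + 1) → Fin n) : ℂ :=
  ∑ l : Fin (k + 1), (-1) ^ (l : ℕ) * dd b (I ∘ l.succAbove) * z (I l)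

/-- The discriminant `Δ ⊂ ℂⁿ`, the union over `1 ≤ i_1 < … < i_{k+1} ≤ n` of the zero sets of
the `f_{i_1,…,i_{k+1}}`. -/
def discr {n k : ℕ} (b : Fin n → Fin k → ℂ) : Set (Fin n → ℂ) :=
  {z | ∃ I : Fin (k + 1) → Fin n, StrictMono I ∧ fF b z I = 0}

/-- The multiplicative set generated by `f_1(t,z), …, f_n(t,z)`. -/
def Sz {n k : ℕ} (b : Fin n → Fin k → ℂ) (z : Fin n → ℂ) :
    Submonoid (MvPolynomial (Fin k) ℂ) :=
  Submonoid.closure (Set.range (fpoly b z))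

/-- `R_z`, the localization of `ℂ[t_1,…,t_k]` at the multiplicative set generated by the
`f_i(t,z)`. -/
abbrev Rz {n k : ℕ} (b : Fin n → Fin k → ℂ) (z : Fin n → ℂ) :=
  Localization (Sz b z)

lemma fpoly_mem {n k : ℕ} (b : Fin n → Fin k → ℂ) (z : Fin n → ℂ) (i : Fin n) :
    fpoly b z i ∈ Sz b z :=
  Submonoid.subset_closure ⟨i, rfl⟩

/-- `∂Φ/∂t_m = ∑_i a_i b_i^m / f_i(t,z)` as an element of `R_z`. -/
def dPhi {n k : ℕ} (a : Fin n → ℂ) (b : Fin n → Fin k → ℂ) (z : Fin n → ℂ)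
    (m : Fin k) : Rz b z :=
  ∑ i, Localization.mk (C (a i * b i m)) ⟨fpoly b z i, fpoly_mem b z i⟩

/-- The ideal `I_z ⊆ R_z` generated by the `∂Φ/∂t_m`, `m = 1,…,k`. -/
def Iz {n k : ℕ} (a : Fin n → ℂ) (b : Fin n → Fin k → ℂ) (z : Fin n → ℂ) :
    Ideal (Rz b z) :=
  Ideal.span (Set.range (dPhi a b z))

/-- The algebra `A_z = R_z / I_z`. -/
abbrev Az {n k : ℕ} (a : Fin n → ℂ) (b : Fin n → Fin k → ℂ) (z : Fin n → ℂ) :=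
  Rz b z ⧸ Iz a b z

/-- `p_j(z) = [a_j / f_j(t,z)] ∈ A_z`. -/
def pz {n k : ℕ} (a : Fin n → ℂ) (b : Fin n → Fin k → ℂ) (z : Fin n → ℂ)
    (j : Fin n) : Az a b z :=
  Ideal.Quotient.mk _ (Localization.mk (C (a j)) ⟨fpoly b z j, fpoly_mem b z j⟩)

/-- The canonical map `ℂ → A_z` (scalars). -/
def cA {n k : ℕ} (a : Fin n → ℂ) (b : Fin n → Fin k → ℂ) (z : Fin n → ℂ)
    (c : ℂ) : Az a b z :=
  @algebraMap ℂ (Az a b z) _ inferInstance inferInstance c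

/-- `w_{i_1,…,i_k} = d_{i_1,…,i_k} p_{i_1}(z) ⋯ p_{i_k}(z) ∈ A_z`. -/
def wz {n k : ℕ} (a : Fin n → ℂ) (b : Fin n → Fin k → ℂ) (z : Fin n → ℂ)
    (l : Fin k → Fin n) : Az a b z :=
  cA a b z (dd b l) * ∏ m, pz a b z (l m)

/-- The image of a polynomial in the field of rational functions `ℂ(t_1,…,t_k)`. -/
def toF {k : ℕ} (q : MvPolynomial (Fin k) ℂ) : FractionRing (MvPolynomial (Fin k) ℂ) :=
  algebraMap _ _ q

theorem Matrix.sum_alternating_minor_mul_row_eq_zero {R : Type*} [CommRing R] {k : ℕ}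
    (M : Matrix (Fin k) (Fin (k + 1)) R) (j : Fin k) :
    ∑ l : Fin (k + 1), (-1) ^ (l : ℕ) * (M.submatrix id l.succAbove).det * M j l = 0 := by
  have hrep : (Matrix.of (Fin.cons (M j) M : Fin (k + 1) → Fin (k + 1) → R)).det = 0 :=
    Matrix.det_zero_of_row_eq (Fin.succ_ne_zero j).symm rfl
  rw [Matrix.det_succ_row_zero] at hrep
  rw [← hrep]
  exact Finset.sum_congr rfl fun l _ => mul_right_comm _ _ _

theorem Fin.sum_mul_prod_eq_sum_mul_prod_succAbove {R : Type*} [CommSemiring R] {k : ℕ}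
    (c F p α : Fin (k + 1) → R) (h : ∀ l, F l * p l = α l) :
    (∑ l, c l * F l) * ∏ m, p m = ∑ l, c l * α l * ∏ m, p (l.succAbove m) := by
  rw [Finset.sum_mul]
  refine Finset.sum_congr rfl fun l _ => ?_
  rw [Fin.prod_univ_succAbove p l, ← h l]
  ring

section

variable {n k : ℕ} (b : Fin n → Fin k → ℂ) (z : Fin n → ℂ)

theorem sum_alternating_minor_mul_fpoly (I : Fin (k + 1) → Fin n) :
    ∑ l : Fin (k + 1), C ((-1) ^ (l : ℕ) * dd b (I ∘ l.succAbove)) * fpoly b z (I l)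
      = C (fF b z I) := by
  have hlinear :
      ∀ j, ∑ l : Fin (k + 1), (-1) ^ (l : ℕ) * dd b (I ∘ l.succAbove) * b (I l) j = 0 :=
    Matrix.sum_alternating_minor_mul_row_eq_zero (Matrix.of fun j m => b (I m) j)
  simp only [fpoly, fF, mul_add, Finset.mul_sum, Finset.sum_add_distrib, map_sum, ← mul_assoc,
    ← C_mul]
  rw [Finset.sum_comm]
  simp only [← Finset.sum_mul, ← map_sum, hlinear, map_zero, zero_mul, Finset.sum_const_zero,
    zero_add]

variable (a : Fin n → ℂ)

theorem cA_mul (x y : ℂ) : cA a b z (x * y) = cA a b z x * cA a b z y :=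
  map_mul _ x y

theorem algebraMap_C_eq_cA (c : ℂ) :
    (algebraMap _ _ : MvPolynomial (Fin k) ℂ →+* Az a b z) (C c) = cA a b z c := by
  rw [cA, IsScalarTower.algebraMap_apply ℂ (MvPolynomial (Fin k) ℂ) (Az a b z)]
  rfl

theorem algebraMap_fpoly_mul_pz (i : Fin n) :
    (algebraMap _ _ : MvPolynomial (Fin k) ℂ →+* Az a b z) (fpoly b z i) * pz a b z i
      = cA a b z (a i) := by
  rw [← algebraMap_C_eq_cA, pz, IsScalarTower.algebraMap_apply _ (Rz b z) (Az a b z),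
    IsScalarTower.algebraMap_apply _ (Rz b z) (Az a b z) (C _), Ideal.Quotient.algebraMap_eq,
    ← map_mul, Localization.mk_eq_mk', mul_comm]
  exact congrArg _ (IsLocalization.mk'_spec _ _ ⟨fpoly b z i, fpoly_mem b z i⟩)

end

theorem stmt10_general (n k' : ℕ) (b : Fin n → Fin (k' + 1) → ℂ) (a : Fin n → ℂ) (z : Fin n → ℂ)
    (I : Fin (k' + 2) → Fin n) :
    cA a b z (fF b z I) * pz a b z (I 0) * wz a b z (I ∘ Fin.succ)
      = cA a b z (dd b (I ∘ Fin.succ)) *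
          ∑ ℓ : Fin (k' + 2),
            cA a b z ((-1) ^ (ℓ : ℕ) * a (I ℓ)) * wz a b z (I ∘ ℓ.succAbove) := by
  have hfF : cA a b z (fF b z I) = ∑ l : Fin (k' + 2),
      cA a b z ((-1) ^ (l : ℕ) * dd b (I ∘ l.succAbove))
        * (algebraMap _ _ : MvPolynomial (Fin (k' + 1)) ℂ →+* Az a b z) (fpoly b z (I l)) := by
    simp only [← algebraMap_C_eq_cA, ← sum_alternating_minor_mul_fpoly b z I, map_sum, map_mul]
  have hexpand := Fin.sum_mul_prod_eq_sum_mul_prod_succAbove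
    (fun l => cA a b z ((-1) ^ (l : ℕ) * dd b (I ∘ l.succAbove)))
    (fun l => (algebraMap _ _ : MvPolynomial (Fin (k' + 1)) ℂ →+* Az a b z) (fpoly b z (I l)))
    (fun l => pz a b z (I l)) (fun l => cA a b z (a (I l)))
    fun l => algebraMap_fpoly_mul_pz b z a (I l)
  rw [← hfF] at hexpand
  calc _ = cA a b z (dd b (I ∘ Fin.succ)) * (cA a b z (fF b z I) * ∏ m, pz a b z (I m)) := by
        rw [wz, Fin.prod_univ_succ (fun m => pz a b z (I m))]
        simp only [Function.comp_apply]
        ring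
    _ = _ := by
        rw [hexpand]
        refine congrArg _ (Finset.sum_congr rfl fun l _ => ?_)
        simp only [wz, cA_mul, Function.comp_apply]
        ring

/-- Fix `n > k ≥ 1` (here `k = k' + 1`), numbers `b_i^j` with all determinants
`d_{i_1,…,i_k}` (distinct indices) nonzero, weights `a_i ∈ ℂ^×` with `|a| = ∑ a_i ≠ 0`, and
`z ∈ ℂⁿ − Δ`.  Then for all distinct indices `i_1,i_2,…,i_{k+1}` (given by the tuple
`I : Fin (k+1) → Fin n`, so `i_1 = I 0` and `(i_2,…,i_{k+1}) = I ∘ Fin.succ`), the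
multiplication formula
`f_{i_1,…,i_{k+1}}(z) ⬝ p_{i_1}(z) ⬝ w_{i_2,…,i_{k+1}} =
  d_{i_2,…,i_{k+1}} ⬝ ∑_{ℓ=1}^{k+1} (-1)^{ℓ+1} a_{i_ℓ} w_{i_1,…,î_ℓ,…,i_{k+1}}`
holds in `A_z`. -/
theorem stmt10 (n k' : ℕ) (hnk : k' + 1 < n) (b : Fin n → Fin (k' + 1) → ℂ)
    (hd : ∀ l : Fin (k' + 1) → Fin n, Function.Injective l → dd b l ≠ 0)
    (a : Fin n → ℂ) (ha : ∀ i, a i ≠ 0) (hsum : ∑ i, a i ≠ 0)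
    (z : Fin n → ℂ) (hz : z ∉ discr b)
    (I : Fin (k' + 2) → Fin n) (hI : Function.Injective I) :
    cA a b z (fF b z I) * pz a b z (I 0) * wz a b z (I ∘ Fin.succ)
      = cA a b z (dd b (I ∘ Fin.succ)) *
          ∑ ℓ : Fin (k' + 2),
            cA a b z ((-1) ^ (ℓ : ℕ) * a (I ℓ)) * wz a b z (I ∘ ℓ.succAbove) :=
  stmt10_general n k' b a z I
end
end

section
/- For every z ∈ ℂ^n − Δ there exist complex numbers e_{i_1,...,i_k}, one for each k-element subset {i_1,...,i_k} ⊂ {1,...,n}, such that in the field of rational functions ℂ(t_1,...,t_k) one has the partial fraction decomposition 1/∏_{j=1}^n f_j(t,z) = ∑_{1 ≤ i_1 < ... < i_k ≤ n} e_{i_1,...,i_k} / (f_{i_1}(t,z)⋯f_{i_k}(t,z)). -/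
/-!
For `k + 1` indices `I`, the coefficient vectors of `f_{I 0}, …, f_{I k}` with respect to
`t_1, …, t_k, 1` form a matrix of determinant `±f_I(z)`. Off `Δ` it is invertible, so some
constant combination of these `k + 1` linear forms equals `1`; multiplying `1 / ∏_{j ∈ T} f_j`
by that identity cancels one factor in each term, and induction on `|T|` brings every term down
to `k` factors. The same determinant shows that no `f_i` vanishes identically off `Δ`: a zero
`f_i` would be a zero column.
-/

open MvPolynomial

noncomputable section

section PartialFractions

variable {R K ι : Type*} [CommRing R] [Field K] [Algebra R K] [DecidableEq ι]

theorem inv_prod_mem_span_inv_prod_card_eq (g : ι → K) (hg : ∀ i, g i ≠ 0) {k : ℕ}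
    (hspan : ∀ S : Finset ι, S.card = k + 1 → (1 : K) ∈ Submodule.span R (g '' S))
    (T : Finset ι) (hT : k ≤ T.card) :
    (∏ i ∈ T, g i)⁻¹ ∈ Submodule.span R
      (Set.range fun s : {s : Finset ι // s.card = k} => (∏ i ∈ s.1, g i)⁻¹) := by
  induction T using Finset.strongInduction with
  | H T ih =>
  rcases hT.eq_or_lt with hTk | hkT
  · exact Submodule.subset_span ⟨⟨T, hTk.symm⟩, rfl⟩
  obtain ⟨S, hST, hS⟩ := Finset.exists_subset_card_eq (Nat.succ_le_of_lt hkT)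
  have hmul := Submodule.apply_mem_span_image_of_mem_span
    (LinearMap.mulRight R (∏ i ∈ T, g i)⁻¹) (hspan S hS)
  rw [LinearMap.mulRight_apply, one_mul] at hmul
  refine Submodule.span_le.2 ?_ hmul
  rintro _ ⟨_, ⟨i, hi, rfl⟩, rfl⟩
  have hiT := hST hi
  have herase : g i * (∏ j ∈ T, g j)⁻¹ = (∏ j ∈ T.erase i, g j)⁻¹ := by
    rw [← Finset.mul_prod_erase T g hiT, mul_inv, mul_inv_cancel_left₀ (hg i)]
  rw [LinearMap.mulRight_apply, herase]
  refine ih _ (Finset.erase_ssubset hiT) ?_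
  rw [Finset.card_erase_of_mem hiT]
  omega

end PartialFractions

section Discriminant

variable {n k : ℕ} (b : Fin n → Fin k → ℂ) (z : Fin n → ℂ)

theorem coeff_single_fpoly (i : Fin n) (j : Fin k) :
    coeff (Finsupp.single j 1) (fpoly b z i) = b i j := by
  simp [fpoly, coeff_sum, coeff_C_mul, coeff_X, coeff_C, Finsupp.single_eq_single_iff,
    (Finsupp.single_ne_zero.2 one_ne_zero).symm]

theorem coeff_zero_fpoly (i : Fin n) : coeff 0 (fpoly b z i) = z i := by
  simp [fpoly, coeff_sum, coeff_C_mul, coeff_zero_X]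

def affineCoords (k : ℕ) : Fin (k + 1) → MvPolynomial (Fin k) ℂ :=
  Fin.snoc X 1

/-- Column `l` is the coefficient vector of `f_{I l}` with respect to `affineCoords k`. -/
def augMat (I : Fin (k + 1) → Fin n) : Matrix (Fin (k + 1)) (Fin (k + 1)) ℂ :=
  Matrix.of fun j l => Fin.snoc (α := fun _ => ℂ) (b (I l)) (z (I l)) j

theorem det_augMat (I : Fin (k + 1) → Fin n) : (augMat b z I).det = (-1) ^ k * fF b z I := by
  rw [Matrix.det_succ_row _ (Fin.last k), fF, Finset.mul_sum]
  refine Finset.sum_congr rfl fun l _ => ?_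
  have hsub : (augMat b z I).submatrix (Fin.last k).succAbove l.succAbove
      = Matrix.of fun j m => b ((I ∘ l.succAbove) m) j := by
    ext j m
    simp [augMat, Fin.succAbove_last]
  rw [hsub, ← dd, augMat, Matrix.of_apply, Fin.snoc_last, Fin.val_last, pow_add]
  ring

theorem fpoly_eq_sum_augMat (I : Fin (k + 1) → Fin n) (l : Fin (k + 1)) :
    fpoly b z (I l) = ∑ j, C (augMat b z I j l) * affineCoords k j := by
  simp [fpoly, augMat, affineCoords, Fin.sum_univ_castSucc]

theorem one_mem_span_fpoly {I : Fin (k + 1) → Fin n} (hI : fF b z I ≠ 0) :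
    (1 : MvPolynomial (Fin k) ℂ) ∈ Submodule.span ℂ (Set.range (fpoly b z ∘ I)) := by
  have hunit : IsUnit (augMat b z I) := by
    rw [Matrix.isUnit_iff_isUnit_det, det_augMat, isUnit_iff_ne_zero]
    exact mul_ne_zero (pow_ne_zero _ (by norm_num)) hI
  obtain ⟨c, hc⟩ := Matrix.mulVec_surjective_iff_isUnit.2 hunit (Pi.single (Fin.last k) 1)
  refine (Submodule.mem_span_range_iff_exists_fun ℂ).2 ⟨c, ?_⟩
  calc ∑ l, c l • fpoly b z (I l)
      = ∑ j, C ((augMat b z I).mulVec c j) * affineCoords k j := by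
        simp only [fpoly_eq_sum_augMat b z I, Finset.smul_sum, smul_eq_C_mul, Matrix.mulVec,
          dotProduct, map_sum, Finset.sum_mul, C_mul]
        rw [Finset.sum_comm]
        exact Finset.sum_congr rfl fun _ _ => Finset.sum_congr rfl fun _ _ => by ring
    _ = 1 := by simp [hc, affineCoords, Pi.single_apply]

theorem fpoly_ne_zero_of_notMem_discr (hkn : k < n) (hz : z ∉ discr b) (i : Fin n) :
    fpoly b z i ≠ 0 := by
  intro hi
  obtain ⟨S, hiS, -, hS⟩ := Finset.exists_subsuperset_card_eq (n := k + 1)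
    (Finset.subset_univ {i}) (by simp) (by simpa using hkn)
  set I := S.orderEmbOfFin hS
  obtain ⟨l, hl⟩ : i ∈ Set.range I := by simpa [I] using hiS
  refine hz ⟨I, I.strictMono, ?_⟩
  have hcol : ∀ j, augMat b z I j l = 0 := by
    refine Fin.lastCases ?_ fun j => ?_
    · simp [augMat, hl, ← coeff_zero_fpoly b z i, hi]
    · simp [augMat, hl, ← coeff_single_fpoly b z i j, hi]
  have hdet := det_augMat b z I
  rw [Matrix.det_eq_zero_of_column_eq_zero l hcol] at hdet
  simpa using hdet.symm

end Discriminant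

theorem stmt16_general (n k : ℕ) (hnk : k < n) (b : Fin n → Fin k → ℂ)
    (z : Fin n → ℂ) (hz : z ∉ discr b) :
    ∃ e : {s : Finset (Fin n) // s.card = k} → ℂ,
      (∏ j : Fin n, toF (fpoly b z j))⁻¹
        = ∑ s : {s : Finset (Fin n) // s.card = k},
            toF (C (e s)) / ∏ i ∈ s.1, toF (fpoly b z i) := by
  have hinj := IsFractionRing.injective (MvPolynomial (Fin k) ℂ)
    (FractionRing (MvPolynomial (Fin k) ℂ))
  have hne (i : Fin n) : toF (fpoly b z i) ≠ 0 :=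
    (map_ne_zero_iff _ hinj).2 (fpoly_ne_zero_of_notMem_discr b z hnk hz i)
  have hspan (S : Finset (Fin n)) (hS : S.card = k + 1) :
      1 ∈ Submodule.span ℂ ((fun i => toF (fpoly b z i)) '' S) := by
    let I := S.orderEmbOfFin hS
    have hpoly := one_mem_span_fpoly b z (I := I) fun h => hz ⟨I, I.strictMono, h⟩
    have := Submodule.apply_mem_span_image_of_mem_span
      (IsScalarTower.toAlgHom ℂ (MvPolynomial (Fin k) ℂ)
        (FractionRing (MvPolynomial (Fin k) ℂ))).toLinearMap hpoly
    simpa [Set.range_comp, I, ← Set.image_comp, toF] using this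
  obtain ⟨e, he⟩ := (Submodule.mem_span_range_iff_exists_fun ℂ).1
    (inv_prod_mem_span_inv_prod_card_eq _ hne hspan Finset.univ (by simpa using hnk.le))
  refine ⟨e, he.symm.trans (Finset.sum_congr rfl fun s _ => ?_)⟩
  rw [Algebra.smul_def, div_eq_mul_inv, toF, ← algebraMap_eq, ← IsScalarTower.algebraMap_apply]

/-- Fix `n > k ≥ 1` and numbers `b_i^j` with all determinants `d_{i_1,…,i_k}` (distinct
indices) nonzero.  Then for every `z ∈ ℂⁿ − Δ` there exist complex numbers `e_{i_1,…,i_k}`,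
one for each `k`-element subset `{i_1,…,i_k} ⊆ {1,…,n}`, such that in the field of rational
functions `ℂ(t_1,…,t_k)` one has the partial fraction decomposition
`1/∏_{j=1}^n f_j(t,z) = ∑_{1 ≤ i_1 < … < i_k ≤ n} e_{i_1,…,i_k}/(f_{i_1}(t,z)⋯f_{i_k}(t,z))`. -/
theorem stmt16 (n k : ℕ) (hk : 1 ≤ k) (hnk : k < n) (b : Fin n → Fin k → ℂ)
    (hd : ∀ l : Fin k → Fin n, Function.Injective l → dd b l ≠ 0)
    (z : Fin n → ℂ) (hz : z ∉ discr b) :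
    ∃ e : {s : Finset (Fin n) // s.card = k} → ℂ,
      (∏ j : Fin n, toF (fpoly b z j))⁻¹
        = ∑ s : {s : Finset (Fin n) // s.card = k},
            toF (C (e s)) / ∏ i ∈ s.1, toF (fpoly b z i) :=
  stmt16_general n k hnk b z hz
end
end
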